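/- The quantity Σ_{θ∈Θ} Σ_{F ∋ θ} (T^k m)(F)/|F| is invariant under T: each application of the fractal splitting operator preserves the pignistic probability of every element, i.e., BetP_{Tm}(θ) = BetP_m(θ) for all θ ∈ Θ. -/

import Mathlib

open Finset Real Filter

/-- A basic probability assignment on the power set of a finite frame `Θ`. -/
noncomputable def IsBPA {Θ : Type*} [Fintype Θ] [DecidableEq Θ] (m : Finset Θ → ℝ) : Prop :=
  m ∅ = 0 ∧ (∀ F, 0 ≤ m F) ∧ ∑ F : Finset Θ, m F = 1

/-- The fractal-based basic probability assignment:
`m_F(F) = m(F)/(2^|F|-1) + Σ_{F ⊊ G} m(G)/(2^|G|-1)`. -/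
noncomputable def mF {Θ : Type*} [Fintype Θ] [DecidableEq Θ] (m : Finset Θ → ℝ) (F : Finset Θ) : ℝ :=
  m F / ((2 : ℝ) ^ F.card - 1) +
    ∑ G ∈ Finset.univ.filter (fun G : Finset Θ => F ⊂ G), m G / ((2 : ℝ) ^ G.card - 1)

/-- Fractal-based belief entropy: Shannon entropy of `m_F` over nonempty subsets. -/
noncomputable def EFB {Θ : Type*} [Fintype Θ] [DecidableEq Θ] (m : Finset Θ → ℝ) : ℝ :=
  ∑ F ∈ Finset.univ.filter (fun F : Finset Θ => F.Nonempty), Real.negMulLog (mF m F)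

/-- Pignistic probability transformation: `BetP(θ) = Σ_{θ ∈ F} m(F)/|F|`. -/
noncomputable def BetP {Θ : Type*} [Fintype Θ] [DecidableEq Θ] (m : Finset Θ → ℝ) (θ : Θ) : ℝ :=
  ∑ F ∈ Finset.univ.filter (fun F : Finset Θ => θ ∈ F), m F / (F.card : ℝ)

/-- Plausibility of a singleton: `Pl(θ) = Σ_{θ ∈ F} m(F)`. -/
noncomputable def Pl {Θ : Type*} [Fintype Θ] [DecidableEq Θ] (m : Finset Θ → ℝ) (θ : Θ) : ℝ :=
  ∑ F ∈ Finset.univ.filter (fun F : Finset Θ => θ ∈ F), m F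

/-! Writing `w G = m G / (2 ^ |G| - 1)`, `mF m F` is the sum of `w G` over all `G ⊇ F`.
Exchanging the two sums in `BetP (mF m) θ`, each `G ∋ θ` contributes
`w G * Σ_{θ ∈ F ⊆ G} 1 / |F|`, and the inner sum is
`Σ_k C(|G| - 1, k) / (k + 1) = (2 ^ |G| - 1) / |G|`, so the contribution is `m G / |G|`,
exactly as in `BetP m θ`. -/

theorem sum_range_choose_div_add_one {K : Type*} [Field K] [CharZero K] (n : ℕ) :
    ∑ k ∈ range (n + 1), (n.choose k : K) / (k + 1) = (2 ^ (n + 1) - 1) / (n + 1) := by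
  -- `(n + 1) * C(n, k) / (k + 1) = C(n + 1, k + 1)` turns the sum into `2 ^ (n + 1) - C(n + 1, 0)`.
  have hterm (k : ℕ) : (n.choose k : K) / (k + 1) * (n + 1) = ((n + 1).choose (k + 1) : K) := by
    have h : ((n + 1) * n.choose k : K) = (n + 1).choose (k + 1) * (k + 1) := by
      exact_mod_cast Nat.add_one_mul_choose_eq n k
    have hk : (k + 1 : K) ≠ 0 := k.cast_add_one_ne_zero
    field_simp
    linear_combination h
  have hsum : ∑ k ∈ range (n + 2), ((n + 1).choose k : K) = 2 ^ (n + 1) := by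
    exact_mod_cast Nat.sum_range_choose (n + 1)
  rw [sum_range_succ', Nat.choose_zero_right, Nat.cast_one] at hsum
  rw [eq_div_iff n.cast_add_one_ne_zero, sum_mul]
  simp only [hterm]
  linear_combination hsum

theorem sum_powerset_filter_mem {α M : Type*} [DecidableEq α] [AddCommMonoid M]
    {G : Finset α} {a : α} (ha : a ∈ G) (f : Finset α → M) :
    ∑ F ∈ G.powerset.filter (a ∈ ·), f F = ∑ T ∈ (G.erase a).powerset, f (insert a T) := by
  conv_lhs => rw [← insert_erase ha]
  have ha' : a ∉ G.erase a := notMem_erase a G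
  rw [sum_filter, sum_powerset_insert ha',
    sum_eq_zero fun T hT => if_neg (notMem_of_mem_powerset_of_notMem hT ha'), zero_add]
  simp only [mem_insert_self, if_true]

theorem sum_powerset_filter_mem_inv_card {α K : Type*} [DecidableEq α] [Field K] [CharZero K]
    {G : Finset α} {a : α} (ha : a ∈ G) :
    ∑ F ∈ G.powerset.filter (a ∈ ·), (F.card : K)⁻¹ = (2 ^ G.card - 1) / G.card := by
  have hcard : (G.erase a).card + 1 = G.card := card_erase_add_one ha
  rw [sum_powerset_filter_mem ha, sum_congr rfl fun T hT => by
      rw [card_insert_of_notMem (notMem_of_mem_powerset_of_notMem hT (notMem_erase a G))],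
    sum_powerset_apply_card (fun k => ((k + 1 : ℕ) : K)⁻¹), ← hcard,
    Nat.cast_add_one, ← sum_range_choose_div_add_one]
  simp [div_eq_mul_inv]

theorem sum_powerset_filter_mem_div_two_pow_sub_one_div_card {α K : Type*} [DecidableEq α]
    [Field K] [CharZero K] (G : Finset α) (a : α) (x : K) :
    ∑ F ∈ G.powerset.filter (a ∈ ·), x / (2 ^ G.card - 1) / F.card =
      if a ∈ G then x / G.card else 0 := by
  split_ifs with ha
  · have hpow : (2 : K) ^ G.card - 1 ≠ 0 :=
      sub_ne_zero.mpr (mod_cast (Nat.one_lt_two_pow (card_ne_zero_of_mem ha)).ne')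
    simp_rw [div_eq_mul_inv (x / _), ← mul_sum, sum_powerset_filter_mem_inv_card ha]
    field_simp
  · rw [filter_false_of_mem fun F hF haF => ha (mem_powerset.mp hF haF), sum_empty]

theorem mF_eq_sum_superset {Θ : Type*} [Fintype Θ] [DecidableEq Θ] (m : Finset Θ → ℝ)
    (F : Finset Θ) : mF m F = ∑ G ∈ univ.filter (F ⊆ ·), m G / (2 ^ G.card - 1) := by
  have h : univ.filter (F ⊆ ·) = insert F (univ.filter (F ⊂ ·)) := by
    ext G
    simp [subset_iff_ssubset_or_eq, eq_comm, or_comm]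
  rw [mF, h, sum_insert (by simp)]

theorem betP_invariant_under_fractal_step_general {Θ : Type*} [Fintype Θ] [DecidableEq Θ]
    (m : Finset Θ → ℝ) :
    ∀ θ : Θ, BetP (mF m) θ = BetP m θ := by
  intro θ
  calc BetP (mF m) θ
      = ∑ F ∈ univ.filter (θ ∈ ·), ∑ G ∈ univ.filter (F ⊆ ·),
          m G / (2 ^ G.card - 1) / F.card := by
        simp only [BetP, mF_eq_sum_superset, sum_div]
    _ = ∑ G, ∑ F ∈ G.powerset.filter (θ ∈ ·), m G / (2 ^ G.card - 1) / F.card :=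
        sum_comm' fun F G => by simp [and_comm]
    _ = ∑ G ∈ univ.filter (θ ∈ ·), m G / G.card := by
        rw [sum_filter]
        exact sum_congr rfl fun G _ => sum_powerset_filter_mem_div_two_pow_sub_one_div_card G θ _

theorem betP_invariant_under_fractal_step {Θ : Type*} [Fintype Θ] [DecidableEq Θ] [Nonempty Θ]
    (m : Finset Θ → ℝ) (h0 : m ∅ = 0) (hnn : ∀ F : Finset Θ, F.Nonempty → 0 ≤ m F)
    (hsum : ∑ F ∈ Finset.univ.filter (fun F : Finset Θ => F.Nonempty), m F = 1) :
    ∀ θ : Θ, BetP (mF m) θ = BetP m θ :=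
  betP_invariant_under_fractal_step_general m
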